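/- Let a ∈ ℝ and b ∈ (a, ∞]. Let θ_1, θ_2 : [a,b) → ℝ be continuous with θ_1(x) ≥ θ_2(x) ≥ 0 for all x ∈ [a,b), and let φ_1, φ_2 : [a,b) → ℝ be C² functions with φ_i'' = θ_i·φ_i on [a,b) for i = 1,2 and φ_2 ≥ 0 on [a,b). Assume φ_1(a) = φ_2(a), that the limits of φ_1(x) and φ_2(x) as x → b⁻ (as x → ∞ if b = ∞) both exist, are equal, and are nonnegative. Then φ_2(x) ≥ φ_1(x) for all x ∈ [a,b). -/

import Mathlib

/-!
Put `ψ = φ₁ - φ₂`. Wherever `ψ > 0` we have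
`ψ'' = θ₁ φ₁ - θ₂ φ₂ = θ₁ ψ + (θ₁ - θ₂) φ₂ ≥ 0`,
so `ψ` is convex on every interval on which it is positive. If `ψ(x₀) > 0`, let `α` be the
last point of `[a, x₀]` where `ψ ≤ 0`. Convexity on `[α, β]` rules out a point `β > x₀` where
`ψ ≤ 0`; hence `ψ` is convex on all of `[α, b)` and, as `ψ(α) ≤ 0 < ψ(x₀)`, satisfies
`ψ ≥ ψ(x₀)` to the right of `x₀`. This contradicts `ψ → 0` at `b`.
-/

open Filter Topology Set

def ConvexOnPositivityIntervals (I : Set ℝ) (ψ : ℝ → ℝ) : Prop :=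
  ∀ α ∈ I, ∀ β ∈ I, (∀ x ∈ Ioo α β, 0 < ψ x) → ConvexOn ℝ (Icc α β) ψ

section PositivityIntervals

variable {ψ : ℝ → ℝ}

theorem exists_last_nonpos_of_continuousOn {a b : ℝ} (hab : a ≤ b)
    (hψ : ContinuousOn ψ (Icc a b)) (ha : ψ a ≤ 0) :
    ∃ c ∈ Icc a b, ψ c ≤ 0 ∧ ∀ x ∈ Ioc c b, 0 < ψ x := by
  have hS : IsCompact (Icc a b ∩ ψ ⁻¹' Iic 0) :=
    isCompact_Icc.of_isClosed_subset
      (hψ.preimage_isClosed_of_isClosed isClosed_Icc isClosed_Iic) inter_subset_left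
  obtain ⟨c, ⟨hc, hψc⟩, hmax⟩ := hS.exists_isGreatest ⟨a, ⟨left_mem_Icc.2 hab, ha⟩⟩
  refine ⟨c, hc, hψc, fun x hx => ?_⟩
  by_contra! hψx
  exact hx.1.not_ge (hmax ⟨⟨hc.1.trans hx.1.le, hx.2⟩, hψx⟩)

theorem exists_first_nonpos_of_continuousOn {a b : ℝ} (hab : a ≤ b)
    (hψ : ContinuousOn ψ (Icc a b)) (hb : ψ b ≤ 0) :
    ∃ c ∈ Icc a b, ψ c ≤ 0 ∧ ∀ x ∈ Ico a c, 0 < ψ x := by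
  have hS : IsCompact (Icc a b ∩ ψ ⁻¹' Iic 0) :=
    isCompact_Icc.of_isClosed_subset
      (hψ.preimage_isClosed_of_isClosed isClosed_Icc isClosed_Iic) inter_subset_left
  obtain ⟨c, ⟨hc, hψc⟩, hmin⟩ := hS.exists_isLeast ⟨b, ⟨right_mem_Icc.2 hab, hb⟩⟩
  refine ⟨c, hc, hψc, fun x hx => ?_⟩
  by_contra! hψx
  exact hx.2.not_ge (hmin ⟨⟨hx.1, hx.2.le.trans hc.2⟩, hψx⟩)

theorem ContDiffOn.convexOnPositivityIntervals {I : Set ℝ} (hI : I.OrdConnected)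
    (hIu : UniqueDiffOn ℝ I) (hψ : ContDiffOn ℝ 2 ψ I)
    (hψ'' : ∀ x ∈ I, 0 < ψ x → 0 ≤ derivWithin (derivWithin ψ I) I x) :
    ConvexOnPositivityIntervals I ψ := by
  intro α hα β hβ hpos
  have hsub : Ioo α β ⊆ I := Ioo_subset_Icc_self.trans (hI.out hα hβ)
  have hψ' : ContDiffOn ℝ 1 (derivWithin ψ I) I := hψ.derivWithin hIu (by norm_num)
  refine convexOn_of_hasDerivWithinAt2_nonneg (f' := derivWithin ψ I)
    (f'' := derivWithin (derivWithin ψ I) I) (convex_Icc α β)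
    (hψ.continuousOn.mono (hI.out hα hβ)) ?_ ?_ ?_ <;> rw [interior_Icc] <;> intro x hx
  · exact (hψ.differentiableOn (by norm_num) x (hsub hx)).hasDerivWithinAt.mono hsub
  · exact (hψ'.differentiableOn (by norm_num) x (hsub hx)).hasDerivWithinAt.mono hsub
  · exact hψ'' x (hsub hx) (hpos x hx)

theorem ConvexOnPositivityIntervals.le_of_pos_of_nonpos_left {I : Set ℝ}
    (hconv : ConvexOnPositivityIntervals I ψ) (hI : I.OrdConnected) (hψ : ContinuousOn ψ I)
    {a x₀ x : ℝ} (ha : a ∈ I) (hx : x ∈ I) (hax₀ : a ≤ x₀) (hx₀x : x₀ ≤ x)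
    (hψa : ψ a ≤ 0) (hψx₀ : 0 < ψ x₀) : ψ x₀ ≤ ψ x := by
  have hx₀ : x₀ ∈ I := hI.out ha hx ⟨hax₀, hx₀x⟩
  obtain ⟨α, hα, hψα, hposα⟩ :=
    exists_last_nonpos_of_continuousOn hax₀ (hψ.mono (hI.out ha hx₀)) hψa
  have hle : ∀ β ∈ I, x₀ ≤ β → (∀ y ∈ Ico x₀ β, 0 < ψ y) → ψ x₀ ≤ ψ β := by
    intro β hβ hx₀β hposβ
    have hpos : ∀ y ∈ Ioo α β, 0 < ψ y := fun y hy =>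
      (le_or_gt y x₀).elim (fun hyx₀ => hposα y ⟨hy.1, hyx₀⟩)
        (fun hyx₀ => hposβ y ⟨hyx₀.le, hy.2⟩)
    have hmax := (hconv α (hI.out ha hx₀ hα) β hβ hpos).le_max_of_mem_Icc
      (left_mem_Icc.2 (hα.2.trans hx₀β)) (right_mem_Icc.2 (hα.2.trans hx₀β)) ⟨hα.2, hx₀β⟩
    exact (le_max_iff.1 hmax).resolve_left (by linarith)
  refine hle x hx hx₀x fun y hy => ?_
  by_contra! hψy
  have hyI : y ∈ I := hI.out hx₀ hx ⟨hy.1, hy.2.le⟩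
  obtain ⟨β, hβ, hψβ, hposβ⟩ :=
    exists_first_nonpos_of_continuousOn hy.1 (hψ.mono (hI.out hx₀ hyI)) hψy
  linarith [hle β (hI.out hx₀ hyI hβ) hβ.1 hposβ]

end PositivityIntervals

theorem comap_coe_nhdsLT_neBot {x : ℝ} {b : EReal} (hx : (x : EReal) < b) :
    (comap ((↑) : ℝ → EReal) (𝓝[<] b)).NeBot := by
  have : (𝓝[<] b).NeBot := nhdsLT_neBot_of_exists_lt ⟨x, hx⟩
  refine this.comap_of_range_mem (mem_of_superset (Ioo_mem_nhdsLT hx) ?_)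
  rw [EReal.range_coe_eq_Ioo]
  exact Ioo_subset_Ioo (EReal.bot_lt_coe x).le le_top

theorem eventually_comap_coe_nhdsLT {x : ℝ} {b : EReal} (hx : (x : EReal) < b) :
    ∀ᶠ y in comap ((↑) : ℝ → EReal) (𝓝[<] b), x < y ∧ (y : EReal) < b := by
  filter_upwards [preimage_mem_comap (Ioo_mem_nhdsLT hx)] with y hy
  exact ⟨EReal.coe_lt_coe_iff.1 hy.1, hy.2⟩

theorem ordConnected_setOf_le_and_coe_lt (a : ℝ) (b : EReal) :
    {x : ℝ | a ≤ x ∧ (x : EReal) < b}.OrdConnected :=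
  ordConnected_Ici.inter (ordConnected_Iio.preimage_mono EReal.coe_strictMono.monotone)

theorem uniqueDiffOn_setOf_le_and_coe_lt (a : ℝ) (b : EReal) :
    UniqueDiffOn ℝ {x : ℝ | a ≤ x ∧ (x : EReal) < b} :=
  (uniqueDiffOn_Ici a).inter (isOpen_Iio.preimage continuous_coe_real_ereal)

theorem derivWithin_derivWithin_sub {𝕜 F : Type*} [NontriviallyNormedField 𝕜]
    [NormedAddCommGroup F] [NormedSpace 𝕜 F] {f g : 𝕜 → F} {s : Set 𝕜} {x : 𝕜}
    (hs : UniqueDiffOn 𝕜 s) (hx : x ∈ s) (hf : ContDiffWithinAt 𝕜 2 f s x)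
    (hg : ContDiffWithinAt 𝕜 2 g s x) :
    derivWithin (derivWithin (f - g) s) s x =
      derivWithin (derivWithin f s) s x - derivWithin (derivWithin g s) s x := by
  have h := iteratedDerivWithin_sub hx hs hf hg
  rw [iteratedDerivWithin_eq_iterate, iteratedDerivWithin_eq_iterate,
    iteratedDerivWithin_eq_iterate] at h
  exact h

theorem sturmLiouville_comparison_general
    (a : ℝ) (b : EReal) (hab : (a : EReal) < b)
    (I : Set ℝ) (hI : I = {x : ℝ | a ≤ x ∧ (x : EReal) < b})
    (θ₁ θ₂ φ₁ φ₂ : ℝ → ℝ)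
    (hθle : ∀ x ∈ I, θ₂ x ≤ θ₁ x) (hθ₂pos : ∀ x ∈ I, 0 ≤ θ₂ x)
    (hφ₁ : ContDiffOn ℝ 2 φ₁ I) (hφ₂ : ContDiffOn ℝ 2 φ₂ I)
    (hode₁ : ∀ x ∈ I, derivWithin (derivWithin φ₁ I) I x = θ₁ x * φ₁ x)
    (hode₂ : ∀ x ∈ I, derivWithin (derivWithin φ₂ I) I x = θ₂ x * φ₂ x)
    (hφ₂pos : ∀ x ∈ I, 0 ≤ φ₂ x)
    (ha : φ₁ a = φ₂ a)
    (hb : ∃ l : ℝ, 0 ≤ l ∧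
      Tendsto φ₁ (Filter.comap (fun x : ℝ => (x : EReal)) (𝓝[<] b)) (𝓝 l) ∧
      Tendsto φ₂ (Filter.comap (fun x : ℝ => (x : EReal)) (𝓝[<] b)) (𝓝 l)) :
    ∀ x ∈ I, φ₁ x ≤ φ₂ x := by
  subst hI
  rintro x₀ ⟨hax₀, hx₀b⟩
  by_contra! hx₀pos
  obtain ⟨l, -, hl₁, hl₂⟩ := hb
  have hIc := ordConnected_setOf_le_and_coe_lt a b
  have hIu := uniqueDiffOn_setOf_le_and_coe_lt a b
  have hψ : ContDiffOn ℝ 2 (φ₁ - φ₂) _ := hφ₁.sub hφ₂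
  have hconv := hψ.convexOnPositivityIntervals hIc hIu fun x hx hpos => by
    rw [derivWithin_derivWithin_sub hIu hx (hφ₁ x hx) (hφ₂ x hx), hode₁ x hx, hode₂ x hx]
    have hθ₁pos := (hθ₂pos x hx).trans (hθle x hx)
    have hψx : 0 < φ₁ x - φ₂ x := hpos
    nlinarith [mul_nonneg (sub_nonneg.2 (hθle x hx)) (hφ₂pos x hx), mul_nonneg hθ₁pos hψx.le]
  have hlim := hl₁.sub hl₂
  rw [sub_self] at hlim
  have := comap_coe_nhdsLT_neBot hx₀b
  refine (sub_pos.2 hx₀pos).not_ge (ge_of_tendsto hlim ?_)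
  filter_upwards [eventually_comap_coe_nhdsLT hx₀b] with y hy
  exact hconv.le_of_pos_of_nonpos_left hIc hψ.continuousOn ⟨le_rfl, hab⟩
    ⟨hax₀.trans hy.1.le, hy.2⟩ hax₀ hy.1.le (by simp [ha]) (sub_pos.2 hx₀pos)

/-- Comparison lemma for Sturm–Liouville equations on `[a,b)` (with `b ∈ (a,∞]`,
encoded as `b : EReal`): if `θ₁ ≥ θ₂ ≥ 0`, `φᵢ'' = θᵢφᵢ`, `φ₂ ≥ 0`, `φ₁(a) = φ₂(a)`,
and `φ₁, φ₂` have the same nonnegative limit at `b⁻`, then `φ₂ ≥ φ₁` on `[a,b)`. -/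
theorem sturmLiouville_comparison
    (a : ℝ) (b : EReal) (hab : (a : EReal) < b)
    (I : Set ℝ) (hI : I = {x : ℝ | a ≤ x ∧ (x : EReal) < b})
    (θ₁ θ₂ φ₁ φ₂ : ℝ → ℝ)
    (hθ₁c : ContinuousOn θ₁ I) (hθ₂c : ContinuousOn θ₂ I)
    (hθle : ∀ x ∈ I, θ₂ x ≤ θ₁ x) (hθ₂pos : ∀ x ∈ I, 0 ≤ θ₂ x)
    (hφ₁ : ContDiffOn ℝ 2 φ₁ I) (hφ₂ : ContDiffOn ℝ 2 φ₂ I)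
    (hode₁ : ∀ x ∈ I, derivWithin (derivWithin φ₁ I) I x = θ₁ x * φ₁ x)
    (hode₂ : ∀ x ∈ I, derivWithin (derivWithin φ₂ I) I x = θ₂ x * φ₂ x)
    (hφ₂pos : ∀ x ∈ I, 0 ≤ φ₂ x)
    (ha : φ₁ a = φ₂ a)
    (hb : ∃ l : ℝ, 0 ≤ l ∧
      Tendsto φ₁ (Filter.comap (fun x : ℝ => (x : EReal)) (𝓝[<] b)) (𝓝 l) ∧
      Tendsto φ₂ (Filter.comap (fun x : ℝ => (x : EReal)) (𝓝[<] b)) (𝓝 l)) :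
    ∀ x ∈ I, φ₁ x ≤ φ₂ x :=
  sturmLiouville_comparison_general a b hab I hI θ₁ θ₂ φ₁ φ₂ hθle hθ₂pos hφ₁ hφ₂ hode₁ hode₂ hφ₂pos
    ha hb
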